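/- There exists a resolvable (5K_{20}, K_4−e)-design: the edge multiset of 5K_{20} can be decomposed into copies of K_4−e grouped into 38 parallel classes, each class consisting of five vertex-disjoint copies of K_4−e covering all 20 vertices. -/

import Mathlib

/-- The multiset of edges of a simple graph on `Fin m`. -/
noncomputable def edgeMultiset {m : ℕ} (H : SimpleGraph (Fin m)) : Multiset (Sym2 (Fin m)) :=
  (Set.toFinite H.edgeSet).toFinset.val

/-- The number of edges of a simple graph on `Fin m`. -/
noncomputable def edgeCount {m : ℕ} (H : SimpleGraph (Fin m)) : ℕ := (edgeMultiset H).card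

/-- The multiset of edges of the copy of `G` given by the embedding `f`. -/
noncomputable def blockEdges {n v : ℕ} (G : SimpleGraph (Fin n)) (f : Fin n ↪ Fin v) :
    Multiset (Sym2 (Fin v)) :=
  (edgeMultiset G).map (Sym2.map ⇑f)

/-- `classes` is a resolvable decomposition of the multigraph `lam • H` into copies
of `G`: each parallel class covers every vertex exactly once, and the edges of all
blocks, counted with multiplicity, are exactly the edges of `H` taken `lam` times. -/
def IsResolvableDecomp {n v : ℕ} (lam : ℕ) (G : SimpleGraph (Fin n))
    (H : SimpleGraph (Fin v))
    (classes : Multiset (Multiset (Fin n ↪ Fin v))) : Prop :=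
  (∀ P ∈ classes, P.bind (fun f => Multiset.map ⇑f Finset.univ.val) =
      (Finset.univ : Finset (Fin v)).val) ∧
  (classes.bind id).bind (fun f => blockEdges G f) = lam • edgeMultiset H

/-- A resolvable `(λ K_v, G)`-design. -/
def IsResolvableDesign {n : ℕ} (lam v : ℕ) (G : SimpleGraph (Fin n))
    (classes : Multiset (Multiset (Fin n ↪ Fin v))) : Prop :=
  IsResolvableDecomp lam G (⊤ : SimpleGraph (Fin v)) classes

/-- The 4-cycle `C₄`. -/
def cycle4 : SimpleGraph (Fin 4) :=
  SimpleGraph.fromRel (fun a b => (a.val, b.val) ∈ [(0,1),(1,2),(2,3),(3,0)])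

/-- The kite `K₃ + e` (triangle `0,1,2` with pendant edge `{2,3}`). -/
def kite : SimpleGraph (Fin 4) :=
  SimpleGraph.fromRel (fun a b => (a.val, b.val) ∈ [(0,1),(0,2),(1,2),(2,3)])

/-- The 3-star `K_{1,3}` with center `0`. -/
def star3 : SimpleGraph (Fin 4) :=
  SimpleGraph.fromRel (fun a b => (a.val, b.val) ∈ [(0,1),(0,2),(0,3)])

/-- The graph `K₄ - e` (missing the edge `{2,3}`). -/
def k4e : SimpleGraph (Fin 4) :=
  SimpleGraph.fromRel (fun a b => (a.val, b.val) ∈ [(0,1),(0,2),(1,2),(0,3),(1,3)])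

/-!
Take the vertex set to be `ℤ/19 ∪ {∞}`, with `ℤ/19` acting by translation and fixing `∞`.
Translating a parallel class gives a parallel class, so the two base classes develop into
`2 · 19 = 38` parallel classes. The translation orbit of a non-loop edge `{x, y}` is determined
by its difference `±(x - y)`, or by whether it passes through `∞`; the ten orbits of
`s(0, d)` for `d = 1, …, 9` and of `s(0, ∞)` are exactly the 190 edges of `K₂₀`. The 50 edges of
the ten base blocks meet each of these ten difference classes exactly five times, so their
development is every edge of `K₂₀` five times over.
-/

open Finset

lemma Multiset.bind_eq_bind_of_map_eq {α β γ : Type*} {s t : Multiset α} {f : α → Multiset γ}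
    {g : α → β} (hfg : ∀ x ∈ s + t, ∀ y ∈ s + t, g x = g y → f x = f y)
    (h : s.map g = t.map g) : s.bind f = t.bind f := by
  classical
  let F : β → Multiset γ := fun b => if hb : ∃ x ∈ s + t, g x = b then f hb.choose else 0
  have hF : ∀ x ∈ s + t, f x = F (g x) := fun x hx => by
    have hex : ∃ y ∈ s + t, g y = g x := ⟨x, hx, rfl⟩
    simp only [F, dif_pos hex]
    exact hfg x hx _ hex.choose_spec.1 hex.choose_spec.2.symm
  calc s.bind f = (s.map g).bind F :=
        (Multiset.bind_congr fun x hx => hF x (Multiset.mem_add.2 (.inl hx))).trans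
          (Multiset.bind_map _ _ _).symm
    _ = t.bind f := by
        rw [h, Multiset.bind_map]
        exact Multiset.bind_congr fun x hx => (hF x (Multiset.mem_add.2 (.inr hx))).symm

lemma Multiset.nsmul_bind {α β : Type*} (k : ℕ) (s : Multiset α) (f : α → Multiset β) :
    (k • s).bind f = k • s.bind f := by
  induction k with
  | zero => simp
  | succ k ih => rw [succ_nsmul, Multiset.add_bind, ih, succ_nsmul]

section Relabeling

variable {n v : ℕ}

lemma edgeMultiset_eq_edgeFinset {m : ℕ} (H : SimpleGraph (Fin m)) [Fintype H.edgeSet] :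
    edgeMultiset H = H.edgeFinset.val := by
  unfold edgeMultiset
  congr 1
  ext e
  simp [SimpleGraph.mem_edgeFinset]

lemma blockEdges_trans (G : SimpleGraph (Fin n)) (f : Fin n ↪ Fin v) (σ : Equiv.Perm (Fin v)) :
    blockEdges G (f.trans σ.toEmbedding) = (blockEdges G f).map (Sym2.map σ) := by
  simp only [blockEdges, Multiset.map_map, ← Sym2.map_comp]
  rfl

lemma not_isDiag_of_mem_blockEdges {G : SimpleGraph (Fin n)} {f : Fin n ↪ Fin v}
    {e : Sym2 (Fin v)} (he : e ∈ blockEdges G f) : ¬ e.IsDiag := by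
  obtain ⟨e₀, he₀, rfl⟩ := Multiset.mem_map.1 he
  rw [Sym2.isDiag_map f.injective]
  exact G.not_isDiag_of_mem_edgeSet (by simpa [edgeMultiset] using he₀)

def IsParallelClass (P : Multiset (Fin n ↪ Fin v)) : Prop :=
  P.bind (fun f => Multiset.map ⇑f Finset.univ.val) = (Finset.univ : Finset (Fin v)).val

lemma IsParallelClass.map_trans {P : Multiset (Fin n ↪ Fin v)} (hP : IsParallelClass P)
    (σ : Equiv.Perm (Fin v)) : IsParallelClass (P.map (·.trans σ.toEmbedding)) := by
  unfold IsParallelClass at hP ⊢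
  rw [← Multiset.map_univ_val_equiv σ, ← hP, Multiset.map_bind, Multiset.bind_map]
  simp only [Multiset.map_map]
  rfl

end Relabeling

section Differences

variable {m : ℕ}

/-- `Fin (m + 1)` is read as `ℤ/m ∪ {∞}` with `∞ = Fin.last m`; edges through `∞` get `none`. -/
def edgeDiff : Sym2 (Fin (m + 1)) → Option (Sym2 (Fin m)) :=
  Sym2.lift ⟨fun x y => Option.map₂ (fun a b => s(a - b, b - a)) (finSuccEquivLast x)
    (finSuccEquivLast y), fun x y => by
      dsimp only; rw [Option.map₂_swap]; congr 1; funext a b; exact Sym2.eq_swap⟩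

@[simp] lemma edgeDiff_castSucc (a b : Fin m) :
    edgeDiff s(a.castSucc, b.castSucc) = some s(a - b, b - a) := by
  simp [edgeDiff]

@[simp] lemma edgeDiff_castSucc_last (a : Fin m) : edgeDiff s(a.castSucc, Fin.last m) = none := by
  simp [edgeDiff]

@[simp] lemma edgeDiff_last_castSucc (a : Fin m) : edgeDiff s(Fin.last m, a.castSucc) = none := by
  simp [edgeDiff]

end Differences

section CyclicDevelopment

variable {m : ℕ} [NeZero m]

def shift (i : Fin m) : Equiv.Perm (Fin (m + 1)) :=
  finSuccEquivLast.trans ((Equiv.optionCongr (Equiv.addRight i)).trans finSuccEquivLast.symm)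

@[simp] lemma shift_castSucc (i a : Fin m) : shift i a.castSucc = (a + i).castSucc := by
  simp [shift]

@[simp] lemma shift_last (i : Fin m) : shift i (Fin.last m) = Fin.last m := by
  simp [shift]

lemma shift_add (i j : Fin m) (x : Fin (m + 1)) : shift (i + j) x = shift j (shift i x) := by
  induction x using Fin.lastCases <;> simp [add_assoc]

def orbit (e : Sym2 (Fin (m + 1))) : Multiset (Sym2 (Fin (m + 1))) :=
  univ.val.map fun i => e.map (shift i)

lemma orbit_map_shift (j : Fin m) (e : Sym2 (Fin (m + 1))) :
    orbit (e.map (shift j)) = orbit e := by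
  have hshift : ∀ i, (e.map (shift j)).map (shift i) = e.map (shift (j + i)) := fun i => by
    rw [Sym2.map_map]; congr 1; funext x; exact (shift_add j i x).symm
  simp only [orbit, hshift]
  conv_rhs => rw [← Multiset.map_univ_val_equiv (Equiv.addLeft j), Multiset.map_map]
  rfl

lemma exists_shift_of_edgeDiff_eq {e e' : Sym2 (Fin (m + 1))} (he : ¬ e.IsDiag)
    (he' : ¬ e'.IsDiag) (h : edgeDiff e = edgeDiff e') : ∃ j, e' = e.map (shift j) := by
  induction e using Sym2.ind with | _ x y =>
  induction e' using Sym2.ind with | _ x' y' =>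
  induction x using Fin.lastCases <;> induction y using Fin.lastCases <;>
    induction x' using Fin.lastCases <;> induction y' using Fin.lastCases <;>
    simp_all
  case cast.cast.cast.cast a b a' b' =>
    rcases h with ⟨h, -⟩ | ⟨h, -⟩
    · exact ⟨a' - a, .inl ⟨by abel, by grind⟩⟩
    · exact ⟨a' - b, .inr ⟨by abel, by grind⟩⟩
  all_goals exact ⟨_, (add_sub_cancel _ _).symm⟩

lemma orbit_eq_of_edgeDiff_eq {e e' : Sym2 (Fin (m + 1))} (he : ¬ e.IsDiag)
    (he' : ¬ e'.IsDiag) (h : edgeDiff e = edgeDiff e') : orbit e = orbit e' := by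
  obtain ⟨j, rfl⟩ := exists_shift_of_edgeDiff_eq he he' h
  exact (orbit_map_shift j e).symm

lemma bind_orbit_eq_of_map_edgeDiff_eq {B R : Multiset (Sym2 (Fin (m + 1)))}
    (hB : ∀ e ∈ B, ¬ e.IsDiag) (hR : ∀ e ∈ R, ¬ e.IsDiag) (h : B.map edgeDiff = R.map edgeDiff) :
    B.bind orbit = R.bind orbit := by
  have hBR : ∀ e ∈ B + R, ¬ e.IsDiag := fun e he =>
    (Multiset.mem_add.1 he).elim (hB e) (hR e)
  exact Multiset.bind_eq_bind_of_map_eq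
    (fun x hx y hy hxy => orbit_eq_of_edgeDiff_eq (hBR x hx) (hBR y hy) hxy) h

def develop {n : ℕ} (P : Multiset (Fin n ↪ Fin (m + 1))) :
    Multiset (Multiset (Fin n ↪ Fin (m + 1))) :=
  univ.val.map fun i => P.map (·.trans (shift i).toEmbedding)

lemma card_of_mem_develop {n : ℕ} {P Q : Multiset (Fin n ↪ Fin (m + 1))} (hP : P ∈ develop Q) :
    Multiset.card P = Multiset.card Q := by
  obtain ⟨i, -, rfl⟩ := Multiset.mem_map.1 hP
  exact Multiset.card_map _ _

lemma isParallelClass_of_mem_develop {n : ℕ} {P Q : Multiset (Fin n ↪ Fin (m + 1))}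
    (hQ : IsParallelClass Q) (hP : P ∈ develop Q) : IsParallelClass P := by
  obtain ⟨i, -, rfl⟩ := Multiset.mem_map.1 hP
  exact hQ.map_trans (shift i)

lemma develop_bind_blockEdges {n : ℕ} (G : SimpleGraph (Fin n))
    (P : Multiset (Fin n ↪ Fin (m + 1))) :
    ((develop P).bind id).bind (blockEdges G) = (P.bind (blockEdges G)).bind orbit := by
  simp only [develop, orbit, Multiset.bind_map, Multiset.bind_assoc, id, blockEdges_trans]
  rw [Multiset.bind_bind]
  exact Multiset.bind_congr fun f _ => Multiset.bind_map_comm _ _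

end CyclicDevelopment

local notation "∞" => Fin.last 19

/-- A block `⟨![a, b, c, d], _⟩` is the paper's `(a, b, c; d)`. -/
def baseClassA : Multiset (Fin 4 ↪ Fin 20) :=
  {⟨![3, 4, 15, ∞], by decide⟩, ⟨![1, 18, 9, 14], by decide⟩, ⟨![2, 0, 5, 8], by decide⟩,
    ⟨![6, 10, 12, 13], by decide⟩, ⟨![7, 16, 11, 17], by decide⟩}

def baseClassB : Multiset (Fin 4 ↪ Fin 20) :=
  {⟨![0, ∞, 1, 15], by decide⟩, ⟨![8, 10, 18, 5], by decide⟩, ⟨![2, 16, 11, 9], by decide⟩,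
    ⟨![14, 13, 17, 7], by decide⟩, ⟨![4, 6, 12, 3], by decide⟩}

instance : DecidableRel k4e.Adj := fun a b =>
  decidable_of_iff _ (SimpleGraph.fromRel_adj _ a b).symm

lemma blockEdges_k4e {v : ℕ} (f : Fin 4 ↪ Fin v) :
    blockEdges k4e f = {s(f 0, f 1), s(f 0, f 2), s(f 1, f 2), s(f 0, f 3), s(f 1, f 3)} := by
  rw [blockEdges, edgeMultiset_eq_edgeFinset,
    show k4e.edgeFinset.val = {s(0, 1), s(0, 2), s(1, 2), s(0, 3), s(1, 3)} by decide]
  rfl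

def differenceReps : Multiset (Sym2 (Fin 20)) :=
  {s(0, 1), s(0, 2), s(0, 3), s(0, 4), s(0, 5), s(0, 6), s(0, 7), s(0, 8), s(0, 9), s(0, ∞)}

lemma not_isDiag_of_mem_differenceReps : ∀ e ∈ differenceReps, ¬ e.IsDiag := by
  simp [differenceReps]

lemma edgeMultiset_top_eq_bind_orbit :
    edgeMultiset (⊤ : SimpleGraph (Fin 20)) = differenceReps.bind orbit := by
  rw [edgeMultiset_eq_edgeFinset]
  decide

lemma map_edgeDiff_baseEdges :
    ((baseClassA + baseClassB).bind (blockEdges k4e)).map edgeDiff =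
      (5 • differenceReps).map edgeDiff := by
  simp only [blockEdges_k4e]
  decide

lemma isParallelClass_baseClassA : IsParallelClass baseClassA := by
  unfold IsParallelClass
  decide

lemma isParallelClass_baseClassB : IsParallelClass baseClassB := by
  unfold IsParallelClass
  decide

theorem stmt11 :
    ∃ classes : Multiset (Multiset (Fin 4 ↪ Fin 20)),
      IsResolvableDesign 5 20 k4e classes ∧
      Multiset.card classes = 38 ∧
      ∀ P ∈ classes, Multiset.card P = 5 := by
  refine ⟨develop baseClassA + develop baseClassB, ⟨fun P hP => ?_, ?_⟩, by simp [develop],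
    fun P hP => ?_⟩
  · rcases Multiset.mem_add.1 hP with hP | hP
    exacts [isParallelClass_of_mem_develop isParallelClass_baseClassA hP,
      isParallelClass_of_mem_develop isParallelClass_baseClassB hP]
  · rw [Multiset.add_bind, Multiset.add_bind, develop_bind_blockEdges, develop_bind_blockEdges,
      ← Multiset.add_bind, ← Multiset.add_bind, edgeMultiset_top_eq_bind_orbit,
      ← Multiset.nsmul_bind]
    refine bind_orbit_eq_of_map_edgeDiff_eq (fun e he => ?_)
      (fun e he => not_isDiag_of_mem_differenceReps e (Multiset.mem_of_mem_nsmul he))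
      map_edgeDiff_baseEdges
    obtain ⟨f, -, he⟩ := Multiset.mem_bind.1 he
    exact not_isDiag_of_mem_blockEdges he
  · rcases Multiset.mem_add.1 hP with hP | hP
    exacts [card_of_mem_develop hP, card_of_mem_develop hP]
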